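/- Suppose the HAP-PRS-SQP relations (a)–(f), the standing assumptions, and t_k^x, t_k^y ≥ γ hold. Then for every k ≥ 1, the merit function satisfies L̂_β(ŵ_{k+1}) − L̂_β(ŵ_k) ≤ −δ^x‖d_k^x‖² − δ^y‖d_k^y‖², where δ^x := ρ γ η₁^x − 6(1−s)²β λ_max(AᵀA)/|r+s| and δ^y := ρ γ η₁^y − (6/(|r+s|β))(L_g² + (1+s²)β² + 2(η₂^y/(1+α))²) − |rs|β/|r+s|. -/

import Mathlib

open scoped RealInnerProductSpace
open Filter

noncomputable section

abbrev Euc (n : ℕ) : Type := EuclideanSpace ℝ (Fin n)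

/-- Augmented Lagrangian `L_β`. -/
def Lbeta {n₁ n₂ : ℕ} (f : Euc n₁ → ℝ) (g : Euc n₂ → ℝ)
    (A : Euc n₁ →L[ℝ] Euc n₂) (β : ℝ) (x : Euc n₁) (y lam : Euc n₂) : ℝ :=
  f x + g y - ⟪lam, A x - y⟫ + (β / 2) * ‖A x - y‖ ^ 2

/-- `𝓗ᵏₓ = Hₖˣ + β AᵀA + ℓ I`. -/
def calHx {n₁ n₂ : ℕ} (A : Euc n₁ →L[ℝ] Euc n₂) (β l : ℝ)
    (H : Euc n₁ →L[ℝ] Euc n₁) : Euc n₁ →L[ℝ] Euc n₁ :=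
  H + β • ((ContinuousLinearMap.adjoint A).comp A) + l • (1 : Euc n₁ →L[ℝ] Euc n₁)

/-- `𝓗ᵏy = Hₖʸ + (β+σ) I`. -/
def calHy {n₂ : ℕ} (β σ : ℝ) (H : Euc n₂ →L[ℝ] Euc n₂) : Euc n₂ →L[ℝ] Euc n₂ :=
  H + (β + σ) • (1 : Euc n₂ →L[ℝ] Euc n₂)

/-- Merit function `L̂_β`. -/
def Lhat {n₁ n₂ : ℕ} (f : Euc n₁ → ℝ) (g : Euc n₂ → ℝ)
    (A : Euc n₁ →L[ℝ] Euc n₂) (β r s Lg η2y α : ℝ)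
    (x : Euc n₁) (y lam d : Euc n₂) : ℝ :=
  Lbeta f g A β x y lam
    + (6 / (|r + s| * β)) * (Lg ^ 2 + β ^ 2 + (η2y / (1 + α)) ^ 2) * ‖d‖ ^ 2

/-- Norm of the full gradient of `L̂_β`, as the sum of the norms of its four block gradients. -/
def gradLhatNorm {n₁ n₂ : ℕ} (f : Euc n₁ → ℝ) (g : Euc n₂ → ℝ)
    (A : Euc n₁ →L[ℝ] Euc n₂) (β r s Lg η2y α : ℝ)
    (x : Euc n₁) (y lam d : Euc n₂) : ℝ :=
  ‖gradient (fun x' => Lhat f g A β r s Lg η2y α x' y lam d) x‖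
    + ‖gradient (fun y' => Lhat f g A β r s Lg η2y α x y' lam d) y‖
    + ‖gradient (fun l' => Lhat f g A β r s Lg η2y α x y l' d) lam‖
    + ‖gradient (fun d' => Lhat f g A β r s Lg η2y α x y lam d') d‖

lemma six_sq (a b c d e f : ℝ) : (a+b+c+d+e+f)^2 ≤ 6*(a^2+b^2+c^2+d^2+e^2+f^2) := by
  nlinarith [sq_nonneg (a-b), sq_nonneg (a-c), sq_nonneg (a-d), sq_nonneg (a-e), sq_nonneg (a-f),
    sq_nonneg (b-c), sq_nonneg (b-d), sq_nonneg (b-e), sq_nonneg (b-f),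
    sq_nonneg (c-d), sq_nonneg (c-e), sq_nonneg (c-f),
    sq_nonneg (d-e), sq_nonneg (d-f), sq_nonneg (e-f)]

lemma lam_shift {n₁ n₂ : ℕ} (f : Euc n₁ → ℝ) (g : Euc n₂ → ℝ)
    (A : Euc n₁ →L[ℝ] Euc n₂) (β : ℝ) (x : Euc n₁) (y lam : Euc n₂) (c : ℝ) :
    Lbeta f g A β x y (lam - c • (A x - y)) = Lbeta f g A β x y lam + c * ‖A x - y‖^2 := by
  unfold Lbeta
  rw [inner_sub_left, real_inner_smul_left, real_inner_self_eq_norm_sq]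
  ring

lemma key_id {n : ℕ} (r s : ℝ) (a b : Euc n) :
    (r+s)*(r*‖a‖^2+s*‖b‖^2) = ‖r•a+s•b‖^2 + (r*s)*‖a-b‖^2 := by
  have h1 : ‖r•a+s•b‖^2 = r^2*‖a‖^2 + 2*(r*s)*⟪a,b⟫ + s^2*‖b‖^2 := by
    rw [norm_add_sq_real, norm_smul, norm_smul, real_inner_smul_left, real_inner_smul_right]
    simp only [Real.norm_eq_abs, mul_pow, sq_abs]
    ring
  have h2 : ‖a-b‖^2 = ‖a‖^2 - 2*⟪a,b⟫ + ‖b‖^2 := norm_sub_sq_real a b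
  linear_combination (-1:ℝ)*h1 - (r*s)*h2

lemma calHy_apply {n : ℕ} (β σ : ℝ) (H : Euc n →L[ℝ] Euc n) (v : Euc n) :
    calHy β σ H v = H v + (β+σ)•v := by
  simp [calHy]

set_option maxHeartbeats 4000000

/-- sufficient descent of the merit function (for every `k ≥ 1`,
reindexed as `k + 1`). -/
theorem stmt10 {n₁ n₂ : ℕ}
    (f : Euc n₁ → ℝ) (g : Euc n₂ → ℝ) (hf : ContDiff ℝ 1 f) (hg : ContDiff ℝ 1 g)
    (A : Euc n₁ →L[ℝ] Euc n₂) (β : ℝ) (hβ : 0 < β)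
    (ν ρ : ℝ) (hν : ν ∈ Set.Ioo (0:ℝ) 1) (hρ : ρ ∈ Set.Ioo (0:ℝ) 1)
    (α : ℝ) (hα : α ∈ Set.Ioo (-1 : ℝ) (1 / ρ - 1))
    (l σ : ℝ) (hl : 0 < l) (hσ : 0 < σ)
    (r s : ℝ) (hrs : r + s ≠ 0)
    (x xt : ℕ → Euc n₁) (y yt : ℕ → Euc n₂) (lam lamh : ℕ → Euc n₂)
    (Hx : ℕ → Euc n₁ →L[ℝ] Euc n₁) (Hy : ℕ → Euc n₂ →L[ℝ] Euc n₂)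
    (hHxsym : ∀ k, IsSelfAdjoint (Hx k)) (hHysym : ∀ k, IsSelfAdjoint (Hy k))
    (hHxpos : ∀ k, ∀ v : Euc n₁, v ≠ 0 → 0 < ⟪v, calHx A β l (Hx k) v⟫)
    (hHypos : ∀ k, ∀ v : Euc n₂, v ≠ 0 → 0 < ⟪v, calHy β σ (Hy k) v⟫)
    (tx ty : ℕ → ℝ) (htx : ∀ k, tx k ∈ Set.Ioc (0:ℝ) 1) (hty : ∀ k, ty k ∈ Set.Ioc (0:ℝ) 1)
    (dx : ℕ → Euc n₁) (dy : ℕ → Euc n₂)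
    (hdx : ∀ k, dx k = (1 + α) • (xt (k+1) - x k))
    (hdy : ∀ k, dy k = (1 + α) • (yt (k+1) - y k))
    (ha : ∀ k, gradient f (x k)
        - (ContinuousLinearMap.adjoint A) (lam k - β • (A (x k) - y k))
        + calHx A β l (Hx k) (xt (k+1) - x k) = 0)
    (hbx : ∀ k, x (k+1) = x k + tx k • dx k)
    (harmx : ∀ k, Lbeta f g A β (x (k+1)) (y k) (lam k)
        ≤ Lbeta f g A β (x k) (y k) (lam k) - ρ * tx k * ⟪dx k, calHx A β l (Hx k) (dx k)⟫)
    (hc : ∀ k, lamh k = lam k - (r * β) • (A (x (k+1)) - y k))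
    (hdg : ∀ k, gradient g (y k) - (lamh k - β • (A (x (k+1)) - y k))
        + calHy β σ (Hy k) (yt (k+1) - y k) = 0)
    (hby : ∀ k, y (k+1) = y k + ty k • dy k)
    (harmy : ∀ k, Lbeta f g A β (x (k+1)) (y (k+1)) (lamh k)
        ≤ Lbeta f g A β (x (k+1)) (y k) (lamh k) - ρ * ty k * ⟪dy k, calHy β σ (Hy k) (dy k)⟫)
    (hlamupd : ∀ k, lam (k+1) = lamh k - (s * β) • (A (x (k+1)) - y (k+1)))
    (hwbdd : ∃ M : ℝ, ∀ k, ‖x k‖ + ‖y k‖ + ‖lam k‖ ≤ M)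
    (ηx ηy : ℝ) (hHxnorm : ∀ k, ‖Hx k‖ ≤ ηx) (hHynorm : ∀ k, ‖Hy k‖ ≤ ηy)
    (η1x η1y : ℝ) (hη1x : 0 < η1x) (hη1y : 0 < η1y)
    (hHxlb : ∀ k, ∀ v : Euc n₁, η1x * ‖v‖ ^ 2 ≤ ⟪v, calHx A β l (Hx k) v⟫)
    (hHylb : ∀ k, ∀ v : Euc n₂, η1y * ‖v‖ ^ 2 ≤ ⟪v, calHy β σ (Hy k) v⟫)
    (Lf Lg : ℝ) (hLf : 0 < Lf) (hLg : 0 < Lg)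
    (hfLip : ∀ k, ∀ t₁ ∈ Set.Icc (0:ℝ) 1, ∀ t₂ ∈ Set.Icc (0:ℝ) 1,
        ‖gradient f (x k + t₁ • dx k) - gradient f (x k + t₂ • dx k)‖
        ≤ Lf * ‖(x k + t₁ • dx k) - (x k + t₂ • dx k)‖)
    (hgLip : ∀ k, ∀ t₁ ∈ Set.Icc (0:ℝ) 1, ∀ t₂ ∈ Set.Icc (0:ℝ) 1,
        ‖gradient g (y k + t₁ • dy k) - gradient g (y k + t₂ • dy k)‖
        ≤ Lg * ‖(y k + t₁ • dy k) - (y k + t₂ • dy k)‖)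
    (nAtA : ℝ) (hnAtA0 : 0 ≤ nAtA)
    (hnAtA : ∀ v : Euc n₁, ‖(ContinuousLinearMap.adjoint A) (A v)‖ ≤ nAtA * ‖v‖)
    (lamMaxAtA : ℝ) (hlamMaxAtA0 : 0 ≤ lamMaxAtA)
    (hlamMaxAtA : ∀ v : Euc n₁, ‖A v‖ ^ 2 ≤ lamMaxAtA * ‖v‖ ^ 2)
    (η2y : ℝ) (hη2ydef : η2y = ηy + β + σ)
    (γ : ℝ) (hγdef : γ = ν * min 1 (min ((1 / (1 + α) - ρ) * η1x / (Lf + β * nAtA))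
        ((1 / (1 + α) - ρ) * η1y / (Lg + β))))
    (htxγ : ∀ k, γ ≤ tx k) (htyγ : ∀ k, γ ≤ ty k)
    (δx δy : ℝ)
    (hδxdef : δx = ρ * γ * η1x - 6 * (1 - s) ^ 2 * β * lamMaxAtA / |r + s|)
    (hδydef : δy = ρ * γ * η1y
        - (6 / (|r + s| * β)) * (Lg ^ 2 + (1 + s ^ 2) * β ^ 2 + 2 * (η2y / (1 + α)) ^ 2)
        - |r * s| * β / |r + s|) :
    ∀ k : ℕ,
      Lhat f g A β r s Lg η2y α (x (k+2)) (y (k+2)) (lam (k+2)) (dy (k+1))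
        - Lhat f g A β r s Lg η2y α (x (k+1)) (y (k+1)) (lam (k+1)) (dy k)
      ≤ -δx * ‖dx (k+1)‖ ^ 2 - δy * ‖dy (k+1)‖ ^ 2 := by
  -- basic positivity facts
  have hα1 : (0:ℝ) < 1 + α := by have := hα.1; linarith
  have hβσ0 : (0:ℝ) ≤ β + σ := by linarith
  have hrsa : (0:ℝ) < |r + s| := abs_pos.mpr hrs
  have hηy0 : (0:ℝ) ≤ ηy := le_trans (norm_nonneg _) (hHynorm 0)
  have hη2y0 : (0:ℝ) ≤ η2y := by rw [hη2ydef]; linarith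
  have hγ0 : (0:ℝ) < γ := by
    have hia : ρ * (1 + α) < 1 := by
      have h1 := mul_lt_mul_of_pos_left hα.2 hρ.1
      have h2 : ρ * (1/ρ) = 1 := mul_one_div_cancel hρ.1.ne'
      nlinarith
    have p1 : (0:ℝ) < 1/(1+α) - ρ := by
      rw [sub_pos, lt_div_iff₀ hα1]; linarith
    have p2 : (0:ℝ) < Lf + β * nAtA := by nlinarith
    have p3 : (0:ℝ) < Lg + β := by linarith
    rw [hγdef]
    exact mul_pos hν.1 (lt_min one_pos (lt_min
      (div_pos (mul_pos p1 hη1x) p2) (div_pos (mul_pos p1 hη1y) p3)))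
  -- bound on the operator calHy
  have hcal : ∀ j (v : Euc n₂), ‖calHy β σ (Hy j) v‖ ≤ η2y * ‖v‖ := by
    intro j v
    rw [calHy_apply]
    calc ‖Hy j v + (β+σ) • v‖ ≤ ‖Hy j v‖ + ‖(β+σ) • v‖ := norm_add_le _ _
      _ ≤ ηy * ‖v‖ + (β+σ) * ‖v‖ := by
          apply add_le_add
          · exact le_trans ((Hy j).le_opNorm v)
              (mul_le_mul_of_nonneg_right (hHynorm j) (norm_nonneg v))
          · rw [norm_smul, Real.norm_eq_abs, abs_of_nonneg hβσ0]
      _ = η2y * ‖v‖ := by rw [hη2ydef]; ring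
  -- key formula for lam (j+1) from the y-subproblem optimality
  have hu : ∀ j, lam (j+1) = gradient g (y j) + (1/(1+α)) • (calHy β σ (Hy j) (dy j))
      + ((1-s)*β) • (A (x (j+1)) - y j) + (s*β*ty j) • dy j := by
    intro j
    have h1 : yt (j+1) - y j = (1/(1+α)) • dy j := by
      rw [hdy j, smul_smul, one_div, inv_mul_cancel₀ hα1.ne', one_smul]
    have h2 := hdg j
    rw [h1, map_smul] at h2
    have h3 := hlamupd j
    rw [hby j] at h3
    have h4 : lamh j = gradient g (y j) + (1/(1+α)) • calHy β σ (Hy j) (dy j)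
        + β • (A (x (j+1)) - y j) := by
      have h5 : lamh j - (gradient g (y j) + (1/(1+α)) • calHy β σ (Hy j) (dy j)
          + β • (A (x (j+1)) - y j))
          = -(gradient g (y j) - (lamh j - β • (A (x (j+1)) - y j))
            + (1/(1+α)) • calHy β σ (Hy j) (dy j)) := by module
      have h6 := sub_eq_zero.mp (by rw [h5, h2, neg_zero])
      exact h6
    rw [h3, h4]
    module
  intro k
  -- abbreviations
  have hAx : A (x (k+2)) = A (x (k+1)) + tx (k+1) • A (dx (k+1)) := by
    rw [hbx (k+1), map_add, map_smul]
  have hyK : y (k+1) = y k + ty k • dy k := hby k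
  -- difference of multipliers
  have hld : lam (k+2) - lam (k+1) = (gradient g (y (k+1)) - gradient g (y k))
      + (1/(1+α)) • (calHy β σ (Hy (k+1)) (dy (k+1)))
      - (1/(1+α)) • (calHy β σ (Hy k) (dy k))
      + ((1-s)*β*tx (k+1)) • (A (dx (k+1)))
      + (s*β*ty (k+1)) • dy (k+1)
      - (β*ty k) • dy k := by
    have e1 := hu (k+1)
    have e2 := hu k
    linear_combination (norm := module) e1 - e2 + ((1-s)*β) • hAx - ((1-s)*β) • hyK
  have hw : lam (k+2) - lam (k+1)
      = -(β • (r • (A (x (k+2)) - y (k+1)) + s • (A (x (k+2)) - y (k+2)))) := by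
    rw [hlamupd (k+1), hc (k+1)]; module
  have hvec : β • (r • (A (x (k+2)) - y (k+1)) + s • (A (x (k+2)) - y (k+2)))
      = -((gradient g (y (k+1)) - gradient g (y k))
      + (1/(1+α)) • (calHy β σ (Hy (k+1)) (dy (k+1)))
      - (1/(1+α)) • (calHy β σ (Hy k) (dy k))
      + ((1-s)*β*tx (k+1)) • (A (dx (k+1)))
      + (s*β*ty (k+1)) • dy (k+1)
      - (β*ty k) • dy k) := by
    linear_combination (norm := module) hw - hld
  -- norms of the six pieces
  have hv1 : ‖gradient g (y (k+1)) - gradient g (y k)‖ ≤ Lg * ‖dy k‖ := by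
    have h := hgLip k (ty k) ⟨(hty k).1.le, (hty k).2⟩ 0 ⟨le_refl 0, zero_le_one⟩
    simp only [zero_smul, add_zero] at h
    rw [← hby k] at h
    have h2 : ‖y (k+1) - y k‖ ≤ ‖dy k‖ := by
      rw [hby k, add_sub_cancel_left, norm_smul, Real.norm_eq_abs,
        abs_of_pos (hty k).1]
      nlinarith [norm_nonneg (dy k), (hty k).2, (hty k).1]
    calc ‖gradient g (y (k+1)) - gradient g (y k)‖ ≤ Lg * ‖y (k+1) - y k‖ := h
      _ ≤ Lg * ‖dy k‖ := mul_le_mul_of_nonneg_left h2 hLg.le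
  have hv2 : ∀ j, ‖(1/(1+α)) • (calHy β σ (Hy j) (dy j))‖ ≤ (η2y/(1+α)) * ‖dy j‖ := by
    intro j
    rw [norm_smul, Real.norm_eq_abs, abs_of_pos (by positivity : (0:ℝ) < 1/(1+α))]
    calc (1/(1+α)) * ‖calHy β σ (Hy j) (dy j)‖ ≤ (1/(1+α)) * (η2y * ‖dy j‖) :=
          mul_le_mul_of_nonneg_left (hcal j (dy j)) (by positivity)
      _ = (η2y/(1+α)) * ‖dy j‖ := by ring
  have hv4 : ‖((1-s)*β*tx (k+1)) • (A (dx (k+1)))‖ ≤ |1-s| * β * ‖A (dx (k+1))‖ := by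
    rw [norm_smul, Real.norm_eq_abs, abs_mul, abs_mul, abs_of_pos hβ,
      abs_of_pos (htx (k+1)).1]
    have h0 : tx (k+1) * ‖A (dx (k+1))‖ ≤ ‖A (dx (k+1))‖ :=
      mul_le_of_le_one_left (norm_nonneg _) (htx (k+1)).2
    nlinarith [mul_le_mul_of_nonneg_left h0 (by positivity : (0:ℝ) ≤ |1-s| * β)]
  have hv5 : ‖(s*β*ty (k+1)) • dy (k+1)‖ ≤ |s| * β * ‖dy (k+1)‖ := by
    rw [norm_smul, Real.norm_eq_abs, abs_mul, abs_mul, abs_of_pos hβ,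
      abs_of_pos (hty (k+1)).1]
    have h0 : ty (k+1) * ‖dy (k+1)‖ ≤ ‖dy (k+1)‖ :=
      mul_le_of_le_one_left (norm_nonneg _) (hty (k+1)).2
    nlinarith [mul_le_mul_of_nonneg_left h0 (by positivity : (0:ℝ) ≤ |s| * β)]
  have hv6 : ‖(β*ty k) • dy k‖ ≤ β * ‖dy k‖ := by
    rw [norm_smul, Real.norm_eq_abs, abs_mul, abs_of_pos hβ, abs_of_pos (hty k).1]
    have h0 : ty k * ‖dy k‖ ≤ ‖dy k‖ :=
      mul_le_of_le_one_left (norm_nonneg _) (hty k).2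
    nlinarith [mul_le_mul_of_nonneg_left h0 hβ.le]
  -- total bound on the multiplier difference
  have hWle : ‖β • (r • (A (x (k+2)) - y (k+1)) + s • (A (x (k+2)) - y (k+2)))‖
      ≤ Lg * ‖dy k‖ + (η2y/(1+α)) * ‖dy (k+1)‖ + (η2y/(1+α)) * ‖dy k‖
        + |1-s| * β * ‖A (dx (k+1))‖ + |s| * β * ‖dy (k+1)‖ + β * ‖dy k‖ := by
    rw [hvec, norm_neg]
    have t1 := norm_sub_le ((gradient g (y (k+1)) - gradient g (y k))
      + (1/(1+α)) • (calHy β σ (Hy (k+1)) (dy (k+1)))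
      - (1/(1+α)) • (calHy β σ (Hy k) (dy k))
      + ((1-s)*β*tx (k+1)) • (A (dx (k+1)))
      + (s*β*ty (k+1)) • dy (k+1)) ((β*ty k) • dy k)
    have t2 := norm_add_le ((gradient g (y (k+1)) - gradient g (y k))
      + (1/(1+α)) • (calHy β σ (Hy (k+1)) (dy (k+1)))
      - (1/(1+α)) • (calHy β σ (Hy k) (dy k))
      + ((1-s)*β*tx (k+1)) • (A (dx (k+1)))) ((s*β*ty (k+1)) • dy (k+1))
    have t3 := norm_add_le ((gradient g (y (k+1)) - gradient g (y k))
      + (1/(1+α)) • (calHy β σ (Hy (k+1)) (dy (k+1)))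
      - (1/(1+α)) • (calHy β σ (Hy k) (dy k))) (((1-s)*β*tx (k+1)) • (A (dx (k+1))))
    have t4 := norm_sub_le ((gradient g (y (k+1)) - gradient g (y k))
      + (1/(1+α)) • (calHy β σ (Hy (k+1)) (dy (k+1)))) ((1/(1+α)) • (calHy β σ (Hy k) (dy k)))
    have t5 := norm_add_le (gradient g (y (k+1)) - gradient g (y k))
      ((1/(1+α)) • (calHy β σ (Hy (k+1)) (dy (k+1))))
    linarith [hv1, hv2 (k+1), hv2 k, hv4, hv5, hv6]
  -- squared bound
  have hAdx : ‖A (dx (k+1))‖^2 ≤ lamMaxAtA * ‖dx (k+1)‖^2 := hlamMaxAtA (dx (k+1))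
  have hW2 : ‖β • (r • (A (x (k+2)) - y (k+1)) + s • (A (x (k+2)) - y (k+2)))‖^2
      ≤ 6*((Lg * ‖dy k‖)^2 + ((η2y/(1+α)) * ‖dy (k+1)‖)^2 + ((η2y/(1+α)) * ‖dy k‖)^2
        + (1-s)^2 * β^2 * (lamMaxAtA * ‖dx (k+1)‖^2)
        + (|s| * β * ‖dy (k+1)‖)^2 + (β * ‖dy k‖)^2) := by
    have hs := six_sq (Lg * ‖dy k‖) ((η2y/(1+α)) * ‖dy (k+1)‖) ((η2y/(1+α)) * ‖dy k‖)
      (|1-s| * β * ‖A (dx (k+1))‖) (|s| * β * ‖dy (k+1)‖) (β * ‖dy k‖)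
    have hsqle : ‖β • (r • (A (x (k+2)) - y (k+1)) + s • (A (x (k+2)) - y (k+2)))‖^2
        ≤ (Lg * ‖dy k‖ + (η2y/(1+α)) * ‖dy (k+1)‖ + (η2y/(1+α)) * ‖dy k‖
        + |1-s| * β * ‖A (dx (k+1))‖ + |s| * β * ‖dy (k+1)‖ + β * ‖dy k‖)^2 := by
      apply pow_le_pow_left₀ (norm_nonneg _) hWle
    have h4sq : (|1-s| * β * ‖A (dx (k+1))‖)^2 = (1-s)^2 * β^2 * ‖A (dx (k+1))‖^2 := by
      rw [mul_pow, mul_pow, sq_abs]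
    have h5 := mul_le_mul_of_nonneg_left hAdx (by positivity : (0:ℝ) ≤ 6*(1-s)^2*β^2)
    linarith [hsqle, hs, h4sq, h5]
  -- Lbeta chain
  have hs1 : ρ * γ * (η1x * ‖dx (k+1)‖^2)
      ≤ ρ * tx (k+1) * ⟪dx (k+1), calHx A β l (Hx (k+1)) (dx (k+1))⟫ := by
    have i1 := hHxlb (k+1) (dx (k+1))
    have i2 : (0:ℝ) ≤ η1x * ‖dx (k+1)‖^2 := by positivity
    have j1 : γ * (η1x * ‖dx (k+1)‖^2) ≤ tx (k+1) * (η1x * ‖dx (k+1)‖^2) :=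
      mul_le_mul_of_nonneg_right (htxγ (k+1)) i2
    have j2 : tx (k+1) * (η1x * ‖dx (k+1)‖^2)
        ≤ tx (k+1) * ⟪dx (k+1), calHx A β l (Hx (k+1)) (dx (k+1))⟫ :=
      mul_le_mul_of_nonneg_left i1 (htx (k+1)).1.le
    nlinarith [mul_le_mul_of_nonneg_left (j1.trans j2) hρ.1.le]
  have hs3 : ρ * γ * (η1y * ‖dy (k+1)‖^2)
      ≤ ρ * ty (k+1) * ⟪dy (k+1), calHy β σ (Hy (k+1)) (dy (k+1))⟫ := by
    have i1 := hHylb (k+1) (dy (k+1))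
    have i2 : (0:ℝ) ≤ η1y * ‖dy (k+1)‖^2 := by positivity
    have j1 : γ * (η1y * ‖dy (k+1)‖^2) ≤ ty (k+1) * (η1y * ‖dy (k+1)‖^2) :=
      mul_le_mul_of_nonneg_right (htyγ (k+1)) i2
    have j2 : ty (k+1) * (η1y * ‖dy (k+1)‖^2)
        ≤ ty (k+1) * ⟪dy (k+1), calHy β σ (Hy (k+1)) (dy (k+1))⟫ :=
      mul_le_mul_of_nonneg_left i1 (hty (k+1)).1.le
    nlinarith [mul_le_mul_of_nonneg_left (j1.trans j2) hρ.1.le]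
  have s1 : Lbeta f g A β (x (k+2)) (y (k+1)) (lam (k+1))
      ≤ Lbeta f g A β (x (k+1)) (y (k+1)) (lam (k+1)) - ρ * γ * (η1x * ‖dx (k+1)‖^2) :=
    le_trans (harmx (k+1)) (by linarith)
  have s3 : Lbeta f g A β (x (k+2)) (y (k+2)) (lamh (k+1))
      ≤ Lbeta f g A β (x (k+2)) (y (k+1)) (lamh (k+1)) - ρ * γ * (η1y * ‖dy (k+1)‖^2) :=
    le_trans (harmy (k+1)) (by linarith)
  have s2 : Lbeta f g A β (x (k+2)) (y (k+1)) (lamh (k+1))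
      = Lbeta f g A β (x (k+2)) (y (k+1)) (lam (k+1))
        + (r*β) * ‖A (x (k+2)) - y (k+1)‖^2 := by
    rw [hc (k+1)]
    exact lam_shift f g A β (x (k+2)) (y (k+1)) (lam (k+1)) (r*β)
  have s4 : Lbeta f g A β (x (k+2)) (y (k+2)) (lam (k+2))
      = Lbeta f g A β (x (k+2)) (y (k+2)) (lamh (k+1))
        + (s*β) * ‖A (x (k+2)) - y (k+2)‖^2 := by
    rw [hlamupd (k+1)]
    exact lam_shift f g A β (x (k+2)) (y (k+2)) (lamh (k+1)) (s*β)
  -- bound on the multiplier correction terms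
  have habn : ‖(A (x (k+2)) - y (k+1)) - (A (x (k+2)) - y (k+2))‖ ≤ ‖dy (k+1)‖ := by
    have hab : (A (x (k+2)) - y (k+1)) - (A (x (k+2)) - y (k+2)) = ty (k+1) • dy (k+1) := by
      rw [hby (k+1)]; module
    rw [hab, norm_smul, Real.norm_eq_abs, abs_of_pos (hty (k+1)).1]
    nlinarith [norm_nonneg (dy (k+1)), (hty (k+1)).2, (hty (k+1)).1]
  have hF5 : (r*β) * ‖A (x (k+2)) - y (k+1)‖^2 + (s*β) * ‖A (x (k+2)) - y (k+2)‖^2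
      ≤ (‖β • (r • (A (x (k+2)) - y (k+1)) + s • (A (x (k+2)) - y (k+2)))‖^2
        + |r*s| * β^2 * ‖dy (k+1)‖^2) / (|r+s| * β) := by
    have hid := key_id r s (A (x (k+2)) - y (k+1)) (A (x (k+2)) - y (k+2))
    have hWsq : ‖β • (r • (A (x (k+2)) - y (k+1)) + s • (A (x (k+2)) - y (k+2)))‖^2
        = β^2 * ‖r • (A (x (k+2)) - y (k+1)) + s • (A (x (k+2)) - y (k+2))‖^2 := by
      rw [norm_smul, Real.norm_eq_abs, abs_of_pos hβ, mul_pow]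
    have h1 : r * ‖A (x (k+2)) - y (k+1)‖^2 + s * ‖A (x (k+2)) - y (k+2)‖^2
        ≤ (‖r • (A (x (k+2)) - y (k+1)) + s • (A (x (k+2)) - y (k+2))‖^2
          + |r*s| * ‖dy (k+1)‖^2) / |r+s| := by
      rw [le_div_iff₀ hrsa]
      have a1 : (r * ‖A (x (k+2)) - y (k+1)‖^2 + s * ‖A (x (k+2)) - y (k+2)‖^2) * |r+s|
          ≤ |(r * ‖A (x (k+2)) - y (k+1)‖^2 + s * ‖A (x (k+2)) - y (k+2)‖^2) * (r+s)| := by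
        rw [abs_mul]
        exact mul_le_mul_of_nonneg_right (le_abs_self _) (abs_nonneg _)
      have a2 : (r * ‖A (x (k+2)) - y (k+1)‖^2 + s * ‖A (x (k+2)) - y (k+2)‖^2) * (r+s)
          = ‖r • (A (x (k+2)) - y (k+1)) + s • (A (x (k+2)) - y (k+2))‖^2
            + (r*s) * ‖(A (x (k+2)) - y (k+1)) - (A (x (k+2)) - y (k+2))‖^2 := by
        linear_combination hid
      have a3 : |‖r • (A (x (k+2)) - y (k+1)) + s • (A (x (k+2)) - y (k+2))‖^2
            + (r*s) * ‖(A (x (k+2)) - y (k+1)) - (A (x (k+2)) - y (k+2))‖^2|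
          ≤ ‖r • (A (x (k+2)) - y (k+1)) + s • (A (x (k+2)) - y (k+2))‖^2
            + |r*s| * ‖(A (x (k+2)) - y (k+1)) - (A (x (k+2)) - y (k+2))‖^2 := by
        refine le_trans (abs_add_le _ _) ?_
        have e1 := abs_of_nonneg (sq_nonneg ‖r • (A (x (k+2)) - y (k+1)) + s • (A (x (k+2)) - y (k+2))‖)
        have e2 := abs_of_nonneg (sq_nonneg ‖(A (x (k+2)) - y (k+1)) - (A (x (k+2)) - y (k+2))‖)
        rw [abs_mul, e1, e2]
      have a4 : ‖(A (x (k+2)) - y (k+1)) - (A (x (k+2)) - y (k+2))‖^2 ≤ ‖dy (k+1)‖^2 := by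
        have := pow_le_pow_left₀ (norm_nonneg ((A (x (k+2)) - y (k+1)) - (A (x (k+2)) - y (k+2)))) habn 2
        exact this
      calc (r * ‖A (x (k+2)) - y (k+1)‖^2 + s * ‖A (x (k+2)) - y (k+2)‖^2) * |r+s|
          ≤ |(r * ‖A (x (k+2)) - y (k+1)‖^2 + s * ‖A (x (k+2)) - y (k+2)‖^2) * (r+s)| := a1
        _ = |‖r • (A (x (k+2)) - y (k+1)) + s • (A (x (k+2)) - y (k+2))‖^2
            + (r*s) * ‖(A (x (k+2)) - y (k+1)) - (A (x (k+2)) - y (k+2))‖^2| := by rw [a2]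
        _ ≤ ‖r • (A (x (k+2)) - y (k+1)) + s • (A (x (k+2)) - y (k+2))‖^2
            + |r*s| * ‖(A (x (k+2)) - y (k+1)) - (A (x (k+2)) - y (k+2))‖^2 := a3
        _ ≤ ‖r • (A (x (k+2)) - y (k+1)) + s • (A (x (k+2)) - y (k+2))‖^2
            + |r*s| * ‖dy (k+1)‖^2 := by
            have := mul_le_mul_of_nonneg_left a4 (abs_nonneg (r*s)); linarith
    calc (r*β) * ‖A (x (k+2)) - y (k+1)‖^2 + (s*β) * ‖A (x (k+2)) - y (k+2)‖^2
        = β * (r * ‖A (x (k+2)) - y (k+1)‖^2 + s * ‖A (x (k+2)) - y (k+2)‖^2) := by ring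
      _ ≤ β * ((‖r • (A (x (k+2)) - y (k+1)) + s • (A (x (k+2)) - y (k+2))‖^2
          + |r*s| * ‖dy (k+1)‖^2) / |r+s|) := mul_le_mul_of_nonneg_left h1 hβ.le
      _ = (‖β • (r • (A (x (k+2)) - y (k+1)) + s • (A (x (k+2)) - y (k+2)))‖^2
          + |r*s| * β^2 * ‖dy (k+1)‖^2) / (|r+s| * β) := by
          rw [hWsq]; field_simp
  -- combine the squared bound with the division
  have hF5' : (r*β) * ‖A (x (k+2)) - y (k+1)‖^2 + (s*β) * ‖A (x (k+2)) - y (k+2)‖^2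
      ≤ (6*((Lg * ‖dy k‖)^2 + ((η2y/(1+α)) * ‖dy (k+1)‖)^2 + ((η2y/(1+α)) * ‖dy k‖)^2
        + (1-s)^2 * β^2 * (lamMaxAtA * ‖dx (k+1)‖^2)
        + (|s| * β * ‖dy (k+1)‖)^2 + (β * ‖dy k‖)^2)
        + |r*s| * β^2 * ‖dy (k+1)‖^2) / (|r+s| * β) := by
    refine le_trans hF5 ?_
    apply div_le_div_of_nonneg_right ?_ (by positivity)
    linarith
  -- coefficient identity
  have hkey : (6*((Lg * ‖dy k‖)^2 + ((η2y/(1+α)) * ‖dy (k+1)‖)^2 + ((η2y/(1+α)) * ‖dy k‖)^2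
        + (1-s)^2 * β^2 * (lamMaxAtA * ‖dx (k+1)‖^2)
        + (|s| * β * ‖dy (k+1)‖)^2 + (β * ‖dy k‖)^2)
        + |r*s| * β^2 * ‖dy (k+1)‖^2) / (|r+s| * β)
      = (6 * (1 - s) ^ 2 * β * lamMaxAtA / |r + s|) * ‖dx (k+1)‖^2
        + ((6 / (|r + s| * β)) * (s ^ 2 * β ^ 2 + (η2y / (1 + α)) ^ 2)
          + |r * s| * β / |r + s|) * ‖dy (k+1)‖^2
        + ((6 / (|r + s| * β)) * (Lg ^ 2 + β ^ 2 + (η2y / (1 + α)) ^ 2)) * ‖dy k‖^2 := by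
    simp only [mul_pow, sq_abs]
    field_simp
    ring
  -- final assembly
  have hF6 := hF5'.trans (le_of_eq hkey)
  simp only [Lhat]
  rw [hδxdef, hδydef]
  linarith [s1, s2, s3, s4, hF6]


end
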